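/- For all integers a, b, c ≥ 5 and every d with 2 ≤ d ≤ 2a−2, in the graph FCS_{a,b,c} the vertices q_{1,2} and t_{1,2} satisfy d(q_{1,2}, p_{1,1}) = d(t_{1,2}, p_{1,1}) and d(q_{1,2}, p_{1,d}) = d(t_{1,2}, p_{1,d}); consequently the set {p_{1,1}, p_{1,d}} is not a metric generator for FCS_{a,b,c}. -/

import Mathlib

/-- Vertex labels of the zigzag-edge coronoid fused with starphene `FCS_{a,b,c}`. -/
inductive FCSV : Type
  | p1 (d : ℕ) | p2 (d : ℕ) | p3 (d : ℕ)
  | q1 (d : ℕ) | q2 (d : ℕ) | q3 (d : ℕ)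
  | r1 (d : ℕ) | r2 (d : ℕ) | r3 (d : ℕ)
  | s1 (d : ℕ) | s2 (d : ℕ) | s3 (d : ℕ)
  | t1 (d : ℕ) | t2 (d : ℕ) | t3 (d : ℕ)
  | u1 (d : ℕ) | u2 (d : ℕ) | u3 (d : ℕ)

/-- Membership in the vertex set of `FCS_{a,b,c}`. -/
def FCSvalid (a b c : ℕ) : FCSV → Prop
  | .p1 d => 1 ≤ d ∧ d ≤ 2*a-1
  | .p2 d => 1 ≤ d ∧ d ≤ 2*a-1
  | .p3 d => 1 ≤ d ∧ d ≤ 2*a-5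
  | .q1 d => 1 ≤ d ∧ d ≤ 2*c-1
  | .q2 d => 1 ≤ d ∧ d ≤ 2*c-1
  | .q3 d => 1 ≤ d ∧ d ≤ 2*c-5
  | .r1 d => 1 ≤ d ∧ d ≤ 2*b-1
  | .r2 d => 1 ≤ d ∧ d ≤ 2*b-1
  | .r3 d => 1 ≤ d ∧ d ≤ 2*b-5
  | .s1 d => 1 ≤ d ∧ d ≤ 2*a-3
  | .s2 d => 1 ≤ d ∧ d ≤ 2*a-3
  | .s3 d => 1 ≤ d ∧ d ≤ 2*a-5
  | .t1 d => 1 ≤ d ∧ d ≤ 2*c-3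
  | .t2 d => 1 ≤ d ∧ d ≤ 2*c-3
  | .t3 d => 1 ≤ d ∧ d ≤ 2*c-5
  | .u1 d => 1 ≤ d ∧ d ≤ 2*b-3
  | .u2 d => 1 ≤ d ∧ d ≤ 2*b-3
  | .u3 d => 1 ≤ d ∧ d ≤ 2*b-5

/-- The vertex set of `FCS_{a,b,c}` as a type. -/
abbrev FCSVert (a b c : ℕ) := {v : FCSV // FCSvalid a b c v}

/-- The (oriented) edge list of `FCS_{a,b,c}`. -/
def FCSadj (a b c : ℕ) : FCSV → FCSV → Prop := fun x y =>
  -- path edges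
  (∃ d, 1 ≤ d ∧ d ≤ 2*a-2 ∧ ((x, y) = (.p1 d, .p1 (d+1)) ∨ (x, y) = (.p2 d, .p2 (d+1)))) ∨
  (∃ d, 1 ≤ d ∧ d ≤ 2*c-2 ∧ ((x, y) = (.q1 d, .q1 (d+1)) ∨ (x, y) = (.q2 d, .q2 (d+1)))) ∨
  (∃ d, 1 ≤ d ∧ d ≤ 2*b-2 ∧ ((x, y) = (.r1 d, .r1 (d+1)) ∨ (x, y) = (.r2 d, .r2 (d+1)))) ∨
  (∃ d, 1 ≤ d ∧ d ≤ 2*a-4 ∧ ((x, y) = (.s1 d, .s1 (d+1)) ∨ (x, y) = (.s2 d, .s2 (d+1)))) ∨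
  (∃ d, 1 ≤ d ∧ d ≤ 2*b-4 ∧ ((x, y) = (.u1 d, .u1 (d+1)) ∨ (x, y) = (.t2 d, .t2 (d+1)))) ∨
  (∃ d, 1 ≤ d ∧ d ≤ 2*c-4 ∧ ((x, y) = (.t1 d, .t1 (d+1)) ∨ (x, y) = (.u2 d, .u2 (d+1)))) ∨
  (∃ d, 1 ≤ d ∧ d ≤ 2*a-6 ∧ ((x, y) = (.p3 d, .p3 (d+1)) ∨ (x, y) = (.s3 d, .s3 (d+1)))) ∨
  (∃ d, 1 ≤ d ∧ d ≤ 2*c-6 ∧ ((x, y) = (.q3 d, .q3 (d+1)) ∨ (x, y) = (.t3 d, .t3 (d+1)))) ∨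
  (∃ d, 1 ≤ d ∧ d ≤ 2*b-6 ∧ ((x, y) = (.r3 d, .r3 (d+1)) ∨ (x, y) = (.u3 d, .u3 (d+1)))) ∨
  -- rung edges
  (∃ d, 1 ≤ d ∧ d ≤ a-1 ∧ ((x, y) = (.p1 (2*d), .s1 (2*d-1)) ∨ (x, y) = (.p2 (2*d), .s2 (2*d-1)))) ∨
  (∃ d, 1 ≤ d ∧ d ≤ c-1 ∧ ((x, y) = (.q1 (2*d), .t1 (2*d-1)) ∨ (x, y) = (.q2 (2*d), .u2 (2*d-1)))) ∨
  (∃ d, 1 ≤ d ∧ d ≤ b-1 ∧ ((x, y) = (.r1 (2*d), .u1 (2*d-1)) ∨ (x, y) = (.r2 (2*d), .t2 (2*d-1)))) ∨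
  (∃ d, 1 ≤ d ∧ d ≤ a-2 ∧ (x, y) = (.p3 (2*d-1), .s3 (2*d-1))) ∨
  (∃ d, 1 ≤ d ∧ d ≤ c-2 ∧ (x, y) = (.q3 (2*d-1), .t3 (2*d-1))) ∨
  (∃ d, 1 ≤ d ∧ d ≤ b-2 ∧ (x, y) = (.r3 (2*d-1), .u3 (2*d-1))) ∨
  -- junction edges
  (x, y) = (.p3 1, .r3 1) ∨ (x, y) = (.q3 1, .u3 1) ∨ (x, y) = (.s3 1, .t3 1) ∨
  (x, y) = (.p3 (2*a-5), .t2 (2*c-4)) ∨ (x, y) = (.s3 (2*a-5), .u2 2) ∨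
  (x, y) = (.q3 (2*c-5), .u1 (2*b-4)) ∨ (x, y) = (.t3 (2*c-5), .s2 (2*a-4)) ∨
  (x, y) = (.r3 (2*b-5), .s1 (2*a-4)) ∨ (x, y) = (.u3 (2*b-5), .t1 2) ∨
  (x, y) = (.p1 1, .q2 1) ∨ (x, y) = (.s1 1, .u2 1) ∨
  (x, y) = (.p1 (2*a-1), .q1 1) ∨ (x, y) = (.s1 (2*a-3), .t1 1) ∨
  (x, y) = (.q1 (2*c-1), .r1 1) ∨ (x, y) = (.t1 (2*c-3), .u1 1) ∨
  (x, y) = (.r1 (2*b-1), .p2 (2*a-1)) ∨ (x, y) = (.u1 (2*b-3), .s2 (2*a-3)) ∨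
  (x, y) = (.p2 1, .r2 (2*b-1)) ∨ (x, y) = (.s2 1, .t2 (2*b-3)) ∨
  (x, y) = (.r2 1, .q2 (2*c-1)) ∨ (x, y) = (.t2 1, .u2 (2*c-3))

/-- The zigzag-edge coronoid fused with starphene `FCS_{a,b,c}`. -/
def FCS (a b c : ℕ) : SimpleGraph (FCSVert a b c) :=
  SimpleGraph.fromRel (fun x y => FCSadj a b c x.1 y.1)

/-- `W` is a metric generator (resolving set) for `G`. -/
def IsResolving {α : Type*} (G : SimpleGraph α) (W : Set α) : Prop :=
  ∀ x y : α, x ≠ y → ∃ w ∈ W, G.dist w x ≠ G.dist w y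

/-- The metric dimension of `G`. -/
noncomputable def metricDim {α : Type*} (G : SimpleGraph α) : ℕ :=
  sInf {n | ∃ W : Set α, W.Finite ∧ W.ncard = n ∧ IsResolving G W}

/-- Distance from a vertex to an edge: minimum of the distances to its endpoints. -/
noncomputable def edgeDist {α : Type*} (G : SimpleGraph α) (x : α) (e : Sym2 α) : ℕ :=
  Sym2.lift ⟨fun y z => min (G.dist x y) (G.dist x z), fun _ _ => min_comm _ _⟩ e

/-- `W` is an edge metric generator for `G`. -/
def IsEdgeResolving {α : Type*} (G : SimpleGraph α) (W : Set α) : Prop :=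
  ∀ e ∈ G.edgeSet, ∀ f ∈ G.edgeSet, e ≠ f → ∃ w ∈ W, edgeDist G w e ≠ edgeDist G w f

/-- The edge metric dimension of `G`. -/
noncomputable def edgeMetricDim {α : Type*} (G : SimpleGraph α) : ℕ :=
  sInf {n | ∃ W : Set α, W.Finite ∧ W.ncard = n ∧ IsEdgeResolving G W}


/-!
The walks `q₁,₂ q₁,₁ p₁,₂ₐ₋₁ … p₁,ₑ` and `t₁,₂ t₁,₁ s₁,₂ₐ₋₃ p₁,₂ₐ₋₂ … p₁,ₑ` show that both
`q₁,₂` and `t₁,₂` are within distance `2a + 1 - e` of `p₁,ₑ`. Conversely, an integer potential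
that changes by at most one across every edge, equals `e - 1` at `p₁,ₑ` and `2a` at `q₁,₂`
and `t₁,₂` shows that both distances are at least `2a + 1 - e`. Hence no `p₁,ₑ` with
`e ≤ 2a - 2` separates `q₁,₂` from `t₁,₂`.
-/

namespace SimpleGraph

variable {V : Type*} {G : SimpleGraph V}

theorem Adj.edist_le_add_one {u v w : V} {n : ℕ∞} (huv : G.Adj u v) (hvw : G.edist v w ≤ n) :
    G.edist u w ≤ n + 1 :=
  calc G.edist u w ≤ G.edist u v + G.edist v w := G.edist_triangle
    _ ≤ 1 + n := add_le_add (edist_eq_one_iff_adj.2 huv).le hvw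
    _ = n + 1 := add_comm _ _

theorem Walk.abs_sub_le_length {f : V → ℤ} (hf : ∀ x y, G.Adj x y → |f x - f y| ≤ 1)
    {u v : V} (p : G.Walk u v) : |f u - f v| ≤ p.length := by
  induction p with
  | nil => simp
  | @cons x y z hxy p ih =>
    calc |f x - f z| ≤ |f x - f y| + |f y - f z| := abs_sub_le _ _ _
      _ ≤ (p.cons hxy).length := by
        rw [length_cons]
        push_cast
        linarith [hf x y hxy]

theorem dist_eq_of_edist_le_of_le_abs_sub {f : V → ℤ}
    (hf : ∀ x y, G.Adj x y → |f x - f y| ≤ 1) {u v : V} {k : ℕ}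
    (hle : G.edist u v ≤ k) (hk : (k : ℤ) ≤ |f u - f v|) : G.dist u v = k := by
  have hreach : G.Reachable u v :=
    reachable_of_edist_ne_top (ne_top_of_le_ne_top (ENat.natCast_ne_top k) hle)
  obtain ⟨p, hp⟩ := hreach.exists_walk_length_eq_dist
  have hupper : G.dist u v ≤ k := by
    rw [← ENat.natCast_le_natCast, hreach.coe_dist_eq_edist]
    exact hle
  have hlower : (k : ℤ) ≤ G.dist u v := hp ▸ hk.trans (p.abs_sub_le_length hf)
  omega

end SimpleGraph

theorem not_isResolving_of_dist_eq {V : Type*} {G : SimpleGraph V} {W : Set V} {x y : V}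
    (hxy : x ≠ y) (h : ∀ w ∈ W, G.dist w x = G.dist w y) : ¬ IsResolving G W := by
  intro hW
  obtain ⟨w, hw, hne⟩ := hW x y hxy
  exact hne (h w hw)

/-- Equal to `d(p₁,₁, ·)` on `p₁` and `s₁`, and to `min (2a) (d(p₁,₁, ·))` on `q₁` and `t₁`.
Elsewhere it is no distance: `q₂`, `r₂`, `t₂`, `u₂` are flattened to `0`/`1`, and `p₂`, `s₂`
and the central layer interpolate linearly between that and the value `2a`. -/
def FCSpotential (a b c : ℕ) : FCSV → ℤ
  | .p1 j => j - 1
  | .s1 j => j + 1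
  | .q1 j | .t1 j => min (2 * a) (2 * a - 2 + j)
  | .r1 _ => 2 * a
  | .u1 j => min (2 * a) (2 * a + 2 * b - 4 - j)
  | .p2 j => j
  | .s2 j => j + 1
  | .q2 _ | .r2 _ => 0
  | .t2 _ | .u2 _ => 1
  | .p3 j => 2 * a - 3 - j
  | .s3 j => 2 * a - 4 - j
  | .r3 j => max (2 * a - 5) (2 * a + 3 - 2 * b + j)
  | .u3 j => max (2 * a - 4) (2 * a + 4 - 2 * b + j)
  | .q3 j => max (2 * a - 4) (2 * a + 4 - 2 * c + j)
  | .t3 j => max (2 * a - 5) (2 * a + 3 - 2 * c + j)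

section FCS

variable {a b c : ℕ}

theorem FCSpotential_lipschitz_of_FCSadj (ha : 4 ≤ a) (hb : 4 ≤ b) (hc : 4 ≤ c) {x y : FCSV}
    (h : FCSadj a b c x y) : |FCSpotential a b c x - FCSpotential a b c y| ≤ 1 := by
  simp only [FCSadj, Prod.mk.injEq] at h
  rw [abs_le]
  casesm* _ ∨ _, ∃ _, _, _ ∧ _ <;> subst_vars <;> simp only [FCSpotential] <;> omega

theorem FCSpotential_lipschitz (ha : 4 ≤ a) (hb : 4 ≤ b) (hc : 4 ≤ c) (x y : FCSVert a b c)
    (h : (FCS a b c).Adj x y) :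
    |FCSpotential a b c x.1 - FCSpotential a b c y.1| ≤ 1 := by
  rcases ((SimpleGraph.fromRel_adj _ _ _).1 h).2 with hxy | hyx
  · exact FCSpotential_lipschitz_of_FCSadj ha hb hc hxy
  · rw [abs_sub_comm]
    exact FCSpotential_lipschitz_of_FCSadj ha hb hc hyx

theorem FCS_dist_eq_of_edist_le (ha : 4 ≤ a) (hb : 4 ≤ b) (hc : 4 ≤ c) {u v : FCSVert a b c}
    {k : ℕ} (hle : (FCS a b c).edist u v ≤ k)
    (hk : (k : ℤ) ≤ FCSpotential a b c u.1 - FCSpotential a b c v.1) :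
    (FCS a b c).dist u v = k :=
  SimpleGraph.dist_eq_of_edist_le_of_le_abs_sub (FCSpotential_lipschitz ha hb hc) hle
    (hk.trans (le_abs_self _))

theorem FCS_edist_p1_le {i j : ℕ} (hij : i ≤ j) (hvi : FCSvalid a b c (.p1 i))
    (hvj : FCSvalid a b c (.p1 j)) :
    (FCS a b c).edist ⟨.p1 j, hvj⟩ ⟨.p1 i, hvi⟩ ≤ (j - i : ℕ) := by
  induction j with
  | zero => simp [show i = 0 by omega]
  | succ j ih =>
    rcases hij.eq_or_lt with rfl | hlt
    · simp
    have hj1 : 1 ≤ j := by have := hvi.1; omega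
    have hj2 : j + 1 ≤ 2 * a - 1 := hvj.2
    have hvj' : FCSvalid a b c (.p1 j) := ⟨hj1, by omega⟩
    have hadj : (FCS a b c).Adj ⟨.p1 (j + 1), hvj⟩ ⟨.p1 j, hvj'⟩ := by simp [FCS, FCSadj]; omega
    calc (FCS a b c).edist ⟨.p1 (j + 1), hvj⟩ ⟨.p1 i, hvi⟩ ≤ (j - i : ℕ) + 1 :=
          hadj.edist_le_add_one (ih (by omega) hvj')
      _ = (j + 1 - i : ℕ) := by exact_mod_cast (show j - i + 1 = j + 1 - i by omega)

theorem FCS_dist_q1_two_p1 (ha : 4 ≤ a) (hb : 4 ≤ b) (hc : 4 ≤ c) {e : ℕ}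
    (hq : FCSvalid a b c (.q1 2)) (hp : FCSvalid a b c (.p1 e)) :
    (FCS a b c).dist ⟨.q1 2, hq⟩ ⟨.p1 e, hp⟩ = 2 * a + 1 - e := by
  have he : 1 ≤ e ∧ e ≤ 2 * a - 1 := hp
  refine FCS_dist_eq_of_edist_le ha hb hc ?_ (by simp only [FCSpotential]; omega)
  have hq1 : FCSvalid a b c (.q1 1) := by simp only [FCSvalid]; omega
  have hp' : FCSvalid a b c (.p1 (2 * a - 1)) := by simp only [FCSvalid]; omega
  have h₁ : (FCS a b c).Adj ⟨.q1 2, hq⟩ ⟨.q1 1, hq1⟩ := by simp [FCS, FCSadj]; omega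
  have h₂ : (FCS a b c).Adj ⟨.q1 1, hq1⟩ ⟨.p1 (2 * a - 1), hp'⟩ := by simp [FCS, FCSadj]
  calc (FCS a b c).edist ⟨.q1 2, hq⟩ ⟨.p1 e, hp⟩ ≤ (2 * a - 1 - e : ℕ) + 1 + 1 :=
        h₁.edist_le_add_one (h₂.edist_le_add_one (FCS_edist_p1_le he.2 hp hp'))
    _ = (2 * a + 1 - e : ℕ) := by
        exact_mod_cast (show 2 * a - 1 - e + 1 + 1 = 2 * a + 1 - e by omega)

theorem FCS_dist_t1_two_p1 (ha : 4 ≤ a) (hb : 4 ≤ b) (hc : 4 ≤ c) {e : ℕ}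
    (he : e ≤ 2 * a - 2) (ht : FCSvalid a b c (.t1 2)) (hp : FCSvalid a b c (.p1 e)) :
    (FCS a b c).dist ⟨.t1 2, ht⟩ ⟨.p1 e, hp⟩ = 2 * a + 1 - e := by
  have he1 : 1 ≤ e := hp.1
  refine FCS_dist_eq_of_edist_le ha hb hc ?_ (by simp only [FCSpotential]; omega)
  have ht1 : FCSvalid a b c (.t1 1) := by simp only [FCSvalid]; omega
  have hs : FCSvalid a b c (.s1 (2 * a - 3)) := by simp only [FCSvalid]; omega
  have hp' : FCSvalid a b c (.p1 (2 * a - 2)) := by simp only [FCSvalid]; omega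
  have h₁ : (FCS a b c).Adj ⟨.t1 2, ht⟩ ⟨.t1 1, ht1⟩ := by simp [FCS, FCSadj]; omega
  have h₂ : (FCS a b c).Adj ⟨.t1 1, ht1⟩ ⟨.s1 (2 * a - 3), hs⟩ := by simp [FCS, FCSadj]
  have h₃ : (FCS a b c).Adj ⟨.s1 (2 * a - 3), hs⟩ ⟨.p1 (2 * a - 2), hp'⟩ := by
    simp [FCS, FCSadj]
    exact ⟨a - 1, by omega⟩
  calc (FCS a b c).edist ⟨.t1 2, ht⟩ ⟨.p1 e, hp⟩ ≤ (2 * a - 2 - e : ℕ) + 1 + 1 + 1 :=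
        h₁.edist_le_add_one (h₂.edist_le_add_one (h₃.edist_le_add_one
          (FCS_edist_p1_le he hp hp')))
    _ = (2 * a + 1 - e : ℕ) := by
        exact_mod_cast (show 2 * a - 2 - e + 1 + 1 + 1 = 2 * a + 1 - e by omega)

end FCS

/-- for a, b, c ≥ 5 and `2 ≤ d ≤ 2a-2`, the vertices `q_{1,2}` and `t_{1,2}`
are at equal distance from both `p_{1,1}` and `p_{1,d}`; consequently `{p_{1,1}, p_{1,d}}`
is not a metric generator for `FCS_{a,b,c}`. -/
theorem statement_15 (a b c : ℕ) (ha : 5 ≤ a) (hb : 5 ≤ b) (hc : 5 ≤ c)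
    (d : ℕ) (hd1 : 2 ≤ d) (hd2 : d ≤ 2*a-2) :
    ((FCS a b c).dist ⟨FCSV.q1 2, by constructor <;> omega⟩
        ⟨FCSV.p1 1, by constructor <;> omega⟩ =
      (FCS a b c).dist ⟨FCSV.t1 2, by constructor <;> omega⟩
        ⟨FCSV.p1 1, by constructor <;> omega⟩) ∧
    ((FCS a b c).dist ⟨FCSV.q1 2, by constructor <;> omega⟩
        ⟨FCSV.p1 d, by constructor <;> omega⟩ =
      (FCS a b c).dist ⟨FCSV.t1 2, by constructor <;> omega⟩
        ⟨FCSV.p1 d, by constructor <;> omega⟩) ∧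
    ¬ IsResolving (FCS a b c)
      {⟨FCSV.p1 1, by constructor <;> omega⟩, ⟨FCSV.p1 d, by constructor <;> omega⟩} := by
  have key : ∀ e (he1 : 1 ≤ e) (he2 : e ≤ 2 * a - 2),
      (FCS a b c).dist ⟨.q1 2, by constructor <;> omega⟩ ⟨.p1 e, by constructor <;> omega⟩ =
        (FCS a b c).dist ⟨.t1 2, by constructor <;> omega⟩ ⟨.p1 e, by constructor <;> omega⟩ :=
    fun e _ he2 => (FCS_dist_q1_two_p1 (by omega) (by omega) (by omega) _ _).trans
      (FCS_dist_t1_two_p1 (by omega) (by omega) (by omega) he2 _ _).symm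
  refine ⟨key 1 le_rfl (by omega), key d (by omega) hd2,
    not_isResolving_of_dist_eq (x := ⟨.q1 2, by constructor <;> omega⟩)
      (y := ⟨.t1 2, by constructor <;> omega⟩) (Subtype.coe_ne_coe.1 (by simp)) ?_⟩
  rintro w (rfl | rfl)
  all_goals rw [SimpleGraph.dist_comm, key _ (by omega) (by omega), SimpleGraph.dist_comm]
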